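/- For every a > 0 and every finite list of distinct positive integers a_1,…,a_k, there exists ς ∈ C_c^∞((0,a)) (viewed as a smooth compactly supported function on ℝ) such that ∫ς(t)dt = 0, ∫t^{a_1}ς(t)dt ≠ 0, and ∫t^{a_j}ς(t)dt = 0 for every 2 ≤ j ≤ k. -/

import Mathlib

open MeasureTheory Metric Filter Set
open scoped ENNReal NNReal Topology

noncomputable section

namespace Zhang

/-- `ℝ^n` with the Euclidean norm. -/
abbrev Euc (n : ℕ) := EuclideanSpace ℝ (Fin n)

/-- Vector fields on `ℝ^n` (as everywhere-defined maps). -/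
abbrev VF (n : ℕ) := Euc n → Euc n

/-- `ν`-parameter degrees. -/
abbrev Deg (ν : ℕ) := Fin ν → ℝ

variable {N ν n q : ℕ}

/-- Admissible multi-parameter dilation data `e = {e_1,…,e_N} ⊆ [0,∞)^ν`. -/
def AdmissibleE (e : Fin N → Fin ν → ℝ) : Prop :=
  (∀ i μ, 0 ≤ e i μ) ∧ (∀ i, ∃ μ, e i μ ≠ 0) ∧ (∀ μ, ∃ i, e i μ ≠ 0)

/-- `δ^d = ∏_μ δ_μ^{d_μ}` (real exponents). -/
def dpow (δ d : Fin ν → ℝ) : ℝ := ∏ μ, δ μ ^ d μ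

/-- The multi-parameter dilation `δ t = (δ^{e_1} t_1, …, δ^{e_N} t_N)`. -/
def dilate (e : Fin N → Fin ν → ℝ) (δ : Fin ν → ℝ) (t : Euc N) : Euc N :=
  (EuclideanSpace.equiv (Fin N) ℝ).symm fun i => dpow δ (e i) * t i

/-- `ς^{(δ)}(t) = δ^{e_1+⋯+e_N} ς(δ t)`. -/
def scaled (e : Fin N → Fin ν → ℝ) (ς : Euc N → ℝ) (δ : Fin ν → ℝ) : Euc N → ℝ :=
  fun t => (∏ i, dpow δ (e i)) * ς (dilate e δ t)

/-- `2^k = (2^{k_1},…,2^{k_ν})`. -/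
def twoPow (k : Fin ν → ℕ) : Fin ν → ℝ := fun μ => 2 ^ k μ

/-- The (global) `C^m` supremum norm of a function. -/
def CmSupNorm {E F : Type*} [NormedAddCommGroup E] [NormedSpace ℝ E]
    [NormedAddCommGroup F] [NormedSpace ℝ F] (m : ℕ) (f : E → F) : ℝ :=
  ∑ j ∈ Finset.range (m + 1), ⨆ t, ‖iteratedFDeriv ℝ j f t‖

/-- The `C^m` supremum norm of a function on a set. -/
def CmSupNormOn {E F : Type*} [NormedAddCommGroup E] [NormedSpace ℝ E]
    [NormedAddCommGroup F] [NormedSpace ℝ F] (m : ℕ) (s : Set E) (f : E → F) : ℝ :=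
  ∑ j ∈ Finset.range (m + 1), ⨆ t ∈ s, ‖iteratedFDerivWithin ℝ j f s t‖

/-- The cancellation condition: the integral of `g` in the coordinates `t_i` with
`e_i^μ ≠ 0` vanishes identically as a function of the remaining coordinates. -/
def CancelCond (e : Fin N → Fin ν → ℝ) (μ : Fin ν) (g : Euc N → ℝ) : Prop :=
  ∀ t : Fin N → ℝ,
    haveI : DecidablePred fun i : Fin N => e i μ ≠ 0 := Classical.decPred _
    (∫ s : {i : Fin N // e i μ ≠ 0} → ℝ,
        g ((EuclideanSpace.equiv (Fin N) ℝ).symm fun i =>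
          if h : e i μ ≠ 0 then s ⟨i, h⟩ else t i)) = 0

/-- Kernel data for the class `𝒦(N,e,a,ν)`: a sequence `{ς_k}_{k∈ℕ^ν}` bounded in
`C_c^∞(B^N(a))` satisfying the cancellation conditions. -/
def IsKernelSeq (e : Fin N → Fin ν → ℝ) (a : ℝ) (ς : (Fin ν → ℕ) → Euc N → ℝ) : Prop :=
  (∀ k, ContDiff ℝ (⊤ : ℕ∞) (ς k)) ∧
  (∀ k, tsupport (ς k) ⊆ ball (0 : Euc N) a) ∧
  (∀ m, ∃ C : ℝ, ∀ k, CmSupNorm m (ς k) ≤ C) ∧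
  (∀ k μ, k μ ≠ 0 → CancelCond e μ (ς k))

/-- Membership in the Fréchet space `𝒦̄(N,e,a,ν)` (closed ball support). -/
def MemKbar (e : Fin N → Fin ν → ℝ) (a : ℝ) (ς : (Fin ν → ℕ) → Euc N → ℝ) : Prop :=
  (∀ k, ContDiff ℝ (⊤ : ℕ∞) (ς k)) ∧
  (∀ k, tsupport (ς k) ⊆ closedBall (0 : Euc N) a) ∧
  (∀ m, ∃ C : ℝ, ∀ k, CmSupNorm m (ς k) ≤ C) ∧
  (∀ k μ, k μ ≠ 0 → CancelCond e μ (ς k))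

/-- The seminorm `‖{ς_k}‖_m = sup_k ‖ς_k‖_{C^m}` of `𝒦̄(N,e,a,ν)`. -/
def seqSeminorm (m : ℕ) (ς : (Fin ν → ℕ) → Euc N → ℝ) : ℝ :=
  ⨆ k, CmSupNorm m (ς k)

/-- The multi-indices `k ∈ ℕ^ν` with all coordinates `≤ M`. -/
def trunc (ν M : ℕ) : Finset (Fin ν → ℕ) :=
  Finset.image (fun k : Fin ν → Fin (M + 1) => fun μ => (k μ : ℕ)) Finset.univ

/-- The partial-sum operators `f ↦ ψ(x) Σ_{|k|≤M} ∫ f(γ_t(x)) ς_k^{(2^k)}(t) dt`. -/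
def partialOp (e : Fin N → Fin ν → ℝ) (γ : Euc N → Euc n → Euc n) (ψ : Euc n → ℝ)
    (ς : (Fin ν → ℕ) → Euc N → ℝ) (M : ℕ) (f : Euc n → ℝ) : Euc n → ℝ :=
  fun x => ψ x * ∑ k ∈ trunc ν M, ∫ t : Euc N, f (γ t x) * scaled e (ς k) (twoPow k) t

/-- `T` is bounded on `L^p`: the partial-sum operators are bounded uniformly in `M`. -/
def OpBounded (p : ℝ) (e : Fin N → Fin ν → ℝ) (γ : Euc N → Euc n → Euc n)
    (ψ : Euc n → ℝ) (ς : (Fin ν → ℕ) → Euc N → ℝ) : Prop :=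
  ∃ C : ℝ≥0, ∀ M : ℕ, ∀ f : Euc n → ℝ, ContDiff ℝ (⊤ : ℕ∞) f → HasCompactSupport f →
    eLpNorm (partialOp e γ ψ ς M f) (ENNReal.ofReal p) volume ≤
      C * eLpNorm f (ENNReal.ofReal p) volume

/-- All operators with small `ψ` and small kernels in `𝒦(N,e,a,ν)` are `L^p` bounded. -/
def AllOpsBounded (p : ℝ) (e : Fin N → Fin ν → ℝ) (γ : Euc N → Euc n → Euc n) : Prop :=
  ∃ ε a : ℝ, 0 < ε ∧ 0 < a ∧
    ∀ ψ : Euc n → ℝ, ContDiff ℝ (⊤ : ℕ∞) ψ → HasCompactSupport ψ →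
      tsupport ψ ⊆ ball (0 : Euc n) ε →
      ∀ ς : (Fin ν → ℕ) → Euc N → ℝ, IsKernelSeq e a ς → OpBounded p e γ ψ ς

/-! ### Vector fields, brackets, Carnot–Carathéodory geometry -/

/-- The Lie bracket of two vector fields. -/
def lieBracket (X Y : VF n) : VF n := fun x => fderiv ℝ Y x (X x) - fderiv ℝ X x (Y x)

/-- `ℒ(S)`: the smallest set of (vector field, degree) pairs containing `S` and
closed under Lie brackets (adding degrees). -/
inductive LieGen (S : Set (VF n × Deg ν)) : VF n × Deg ν → Prop
  | base {P : VF n × Deg ν} : P ∈ S → LieGen S P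
  | bracket {X Y : VF n} {d d' : Deg ν} : LieGen S (X, d) → LieGen S (Y, d') →
      LieGen S (lieBracket X Y, d + d')

def lieSpan (S : Set (VF n × Deg ν)) : Set (VF n × Deg ν) := {P | LieGen S P}

def unitCube (ν : ℕ) : Set (Fin ν → ℝ) := {δ | ∀ μ, 0 ≤ δ μ ∧ δ μ ≤ 1}

def vecConst (ν : ℕ) (ξ : ℝ) : Fin ν → ℝ := fun _ => ξ

/-- `a` is a measurable control with `‖Σ_l |a_l|²‖_{L^∞[0,1]} < 1`. -/
def IsSubunit {ι : Type*} [Fintype ι] (a : ℝ → ι → ℝ) : Prop :=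
  (∀ l, Measurable fun s => a s l) ∧
  ∃ c : ℝ, c < 1 ∧ ∀ᵐ s ∂(volume.restrict (Set.Icc (0 : ℝ) 1)), ∑ l, a s l ^ 2 ≤ c

/-- `g` is an absolutely continuous solution of `g' = Σ_l a_l δ^{d_l} X_l(g)`, `g(0)=x`,
in integral form. -/
def SolvesODE {ι : Type*} [Fintype ι] (X : ι → VF n) (d : ι → Deg ν) (δ : Fin ν → ℝ)
    (a : ℝ → ι → ℝ) (x : Euc n) (g : ℝ → Euc n) : Prop :=
  g 0 = x ∧ ∀ u ∈ Set.Icc (0 : ℝ) 1,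
    g u = x + ∫ s in (0 : ℝ)..u, ∑ l, a s l • dpow δ (d l) • X l (g s)

/-- The multi-parameter Carnot–Carathéodory ball `B_{(X,d)}(x,δ)` inside `Ω`. -/
def CCBall {ι : Type*} [Fintype ι] (X : ι → VF n) (d : ι → Deg ν) (Ω : Set (Euc n))
    (x : Euc n) (δ : Fin ν → ℝ) : Set (Euc n) :=
  {y | ∃ (g : ℝ → Euc n) (a : ℝ → ι → ℝ), IsSubunit a ∧
      (∀ u ∈ Set.Icc (0 : ℝ) 1, g u ∈ Ω) ∧ SolvesODE X d δ a x g ∧ g 1 = y}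

/-- `(X,d)` satisfies `𝒞(x,δ,Ω)`. -/
def SatC {ι : Type*} [Fintype ι] (X : ι → VF n) (d : ι → Deg ν) (x : Euc n)
    (δ : Fin ν → ℝ) (Ω : Set (Euc n)) : Prop :=
  ∀ a : ℝ → ι → ℝ, IsSubunit a →
    ∃ g : ℝ → Euc n, (∀ u ∈ Set.Icc (0 : ℝ) 1, g u ∈ Ω) ∧ SolvesODE X d δ a x g

/-- The derivation of a scalar function along a vector field. -/
def derivAlong (Y : VF n) (f : Euc n → ℝ) : Euc n → ℝ := fun x => fderiv ℝ f x (Y x)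

/-- `(δX)^α f`: iterated derivations indexed by the ordered multi-index `α`. -/
def derivList {ι : Type*} (X : ι → VF n) (w : ι → ℝ) (α : List ι) (f : Euc n → ℝ) :
    Euc n → ℝ :=
  α.foldr (fun l g => derivAlong (fun x => w l • X l x) g) f

/-- `(X,d)` controls `(X₀,d₀)` on `U` with parameter `ξ₁` (ambient `Ω`). -/
def ControlsOn {ι : Type*} [Fintype ι] (X : ι → VF n) (d : ι → Deg ν)
    (Ω U : Set (Euc n)) (ξ₁ : ℝ) (X₀ : VF n) (d₀ : Deg ν) : Prop :=
  (∀ x ∈ U, SatC X d x (vecConst ν ξ₁) Ω) ∧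
  ∃ c : Euc n → (Fin ν → ℝ) → ι → Euc n → ℝ,
    (∀ x ∈ U, ∀ δ ∈ unitCube ν, ∀ y ∈ CCBall X d Ω x (fun μ => ξ₁ * δ μ),
      dpow δ d₀ • X₀ y = ∑ l, c x δ l y • dpow δ (d l) • X l y) ∧
    (∀ x ∈ U, ∀ δ ∈ unitCube ν, ∀ l, ∀ α : List ι,
      ContinuousOn (derivList X (fun l' => dpow δ (d l')) α (c x δ l))
        (CCBall X d Ω x (fun μ => ξ₁ * δ μ))) ∧
    (∀ m : ℕ, ∃ C : ℝ, ∀ x ∈ U, ∀ δ ∈ unitCube ν, ∀ l, ∀ α : List ι, α.length ≤ m →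
      ∀ y ∈ CCBall X d Ω x (fun μ => ξ₁ * δ μ),
        |derivList X (fun l' => dpow δ (d l')) α (c x δ l) y| ≤ C)

/-- `(X,d)` controls `(X₀,d₀)` (some `U`, `ξ₁`), ambient `Ω`. -/
def ControlsPair {ι : Type*} [Fintype ι] (X : ι → VF n) (d : ι → Deg ν)
    (Ω : Set (Euc n)) (X₀ : VF n) (d₀ : Deg ν) : Prop :=
  ∃ (U : Set (Euc n)) (ξ₁ : ℝ), IsOpen U ∧ (0 : Euc n) ∈ U ∧ U ⊆ Ω ∧ 0 < ξ₁ ∧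
    ControlsOn X d Ω U ξ₁ X₀ d₀

/-- A finite set of pairs controls a pair (ambient neighborhood existentially quantified). -/
def FinsetControls (F : Finset (VF n × Deg ν)) (P : VF n × Deg ν) : Prop :=
  ∃ Ω : Set (Euc n), IsOpen Ω ∧ (0 : Euc n) ∈ Ω ∧
    ControlsPair (fun l : F => (l : VF n × Deg ν).1) (fun l : F => (l : VF n × Deg ν).2)
      Ω P.1 P.2

/-- A set `S` of pairs controls a set `T`. -/
def SetControls (S T : Set (VF n × Deg ν)) : Prop :=
  ∃ F : Finset (VF n × Deg ν), ↑F ⊆ S ∧ ∀ P ∈ S ∪ T, FinsetControls F P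

/-! ### Degrees, Taylor coefficients, exponential coefficients -/

def degMulti (e : Fin N → Fin ν → ℝ) (α : Fin N → ℕ) : Fin ν → ℝ :=
  fun μ => ∑ i, (α i : ℝ) * e i μ

/-- A degree is pure if it has exactly one nonzero coordinate. -/
def IsPureDeg (dg : Fin ν → ℝ) : Prop := ∃! μ, dg μ ≠ 0

/-- `t^α`. -/
def monomial (α : Fin N → ℕ) (t : Euc N) : ℝ := ∏ i, t i ^ α i

/-- The multi-indices `α` with `|α| < M`. -/
def multiIdxLt (N M : ℕ) : Finset (Fin N → ℕ) :=
  (trunc N M).filter fun α => ∑ i, α i < M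

/-- `X` is the family of Taylor coefficient vector fields of `W` at `t = 0`, on `U`. -/
def IsTaylorFieldOf (W : Euc N → Euc n → Euc n) (U : Set (Euc n))
    (X : (Fin N → ℕ) → VF n) : Prop :=
  X 0 = 0 ∧ (∀ α, ContDiffOn ℝ (⊤ : ℕ∞) (X α) U) ∧
  ∀ M : ℕ, ∃ C ε : ℝ, 0 < ε ∧ ∀ t ∈ ball (0 : Euc N) ε, ∀ x ∈ U,
    ‖W t x - ∑ α ∈ multiIdxLt N M, monomial α t • X α x‖ ≤ C * ‖t‖ ^ M

/-- `W(t,x) = (d/dε)|_{ε=1} γ_{εt}(γ_t⁻¹(x))` on `B^N(ρ) × U`. -/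
def IsWFor (γ : Euc N → Euc n → Euc n) (ρ : ℝ) (U : Set (Euc n))
    (W : Euc N → Euc n → Euc n) : Prop :=
  ∃ γinv : Euc N → Euc n → Euc n,
    (∀ t ∈ ball (0 : Euc N) ρ, ∀ x ∈ U, γ t (γinv t x) = x ∧ γinv t (γ t x) = x) ∧
    ∀ t ∈ ball (0 : Euc N) ρ, ∀ x ∈ U,
      HasDerivAt (fun ε : ℝ => γ (ε • t) (γinv t x)) (W t x) 1

/-- `y` is the time-one flow of the vector field `V` from `x`. -/
def FlowsTo (V : VF n) (x y : Euc n) : Prop :=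
  ∃ φ : ℝ → Euc n, φ 0 = x ∧ φ 1 = y ∧ ∀ s ∈ Set.Icc (0 : ℝ) 1, HasDerivAt φ (V (φ s)) s

/-- `Xh` is the family of exponential coefficient vector fields of `γ`:
`γ_t(x) = e^{Σ_{0<|α|<M} t^α X̂_α} x + O(|t|^M)` for every `M`. -/
def IsExpFieldsFor (γ : Euc N → Euc n → Euc n) (U : Set (Euc n))
    (Xh : (Fin N → ℕ) → VF n) : Prop :=
  Xh 0 = 0 ∧ (∀ α, ContDiffOn ℝ (⊤ : ℕ∞) (Xh α) U) ∧
  ∀ M : ℕ, ∃ C ε : ℝ, 0 < ε ∧ ∀ t ∈ ball (0 : Euc N) ε, ∀ x ∈ U,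
    ∃ y : Euc n, FlowsTo (fun z => ∑ α ∈ multiIdxLt N M, monomial α t • Xh α z) x y ∧
      ‖γ t x - y‖ ≤ C * ‖t‖ ^ M

/-- The pure power set `𝒫` of a family of coefficient fields. -/
def pureSet (e : Fin N → Fin ν → ℝ) (X : (Fin N → ℕ) → VF n) : Set (VF n × Deg ν) :=
  {P | ∃ α : Fin N → ℕ, α ≠ 0 ∧ IsPureDeg (degMulti e α) ∧ P = (X α, degMulti e α)}

/-- The nonpure power set `𝒩` of a family of coefficient fields. -/
def nonpureSet (e : Fin N → Fin ν → ℝ) (X : (Fin N → ℕ) → VF n) : Set (VF n × Deg ν) :=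
  {P | ∃ α : Fin N → ℕ, α ≠ 0 ∧ ¬ IsPureDeg (degMulti e α) ∧ P = (X α, degMulti e α)}

/-! ### Strong control -/

/-- `(X,d)` strongly controls `(X₀,d₀)`. -/
def StrongControlsOn {ι : Type*} [Fintype ι] (X : ι → VF n) (d : ι → Deg ν)
    (X₀ : VF n) (d₀ : Deg ν) : Prop :=
  ∃ (U V : Set (Euc n)) (c : ι → Euc n → ℝ),
    IsOpen U ∧ (0 : Euc n) ∈ U ∧ IsOpen V ∧ closure U ⊆ V ∧
    (∀ l, ContDiffOn ℝ (⊤ : ℕ∞) (c l) V) ∧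
    (∀ l, ¬ (∀ μ, d l μ ≤ d₀ μ) → c l = 0) ∧
    (∀ x ∈ U, X₀ x = ∑ l, c l x • X l x)

/-- A finite set of pairs strongly controls a pair. -/
def FinsetStrongControls (F : Finset (VF n × Deg ν)) (P : VF n × Deg ν) : Prop :=
  StrongControlsOn (fun l : F => (l : VF n × Deg ν).1) (fun l : F => (l : VF n × Deg ν).2)
    P.1 P.2

/-- `(X,d)` strongly controls `W(t,x)`. -/
def StrongControlsW {ι : Type*} [Fintype ι] (X : ι → VF n) (d : ι → Deg ν)
    (e : Fin N → Fin ν → ℝ) (W : Euc N → Euc n → Euc n) : Prop :=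
  ∃ (ρ' : ℝ) (U : Set (Euc n)) (V : Set (Euc N × Euc n)) (A : Finset (Fin N → ℕ))
    (c : ι → (Fin N → ℕ) → Euc N → Euc n → ℝ),
    0 < ρ' ∧ IsOpen U ∧ (0 : Euc n) ∈ U ∧ IsOpen V ∧
    closure (ball (0 : Euc N) ρ' ×ˢ U) ⊆ V ∧
    (∀ l α, ContDiffOn ℝ (⊤ : ℕ∞) (fun p : Euc N × Euc n => c l α p.1 p.2) V) ∧
    (∀ l α, degMulti e α ≠ d l → c l α = 0) ∧
    (∀ t ∈ ball (0 : Euc N) ρ', ∀ x ∈ U,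
      W t x = ∑ l, ∑ α ∈ A, (c l α t x * monomial α t) • X l x)

/-- A finite set of pairs strongly controls `W`. -/
def FinsetStrongControlsW (F : Finset (VF n × Deg ν)) (e : Fin N → Fin ν → ℝ)
    (W : Euc N → Euc n → Euc n) : Prop :=
  StrongControlsW (fun l : F => (l : VF n × Deg ν).1) (fun l : F => (l : VF n × Deg ν).2)
    e W

/-! ### Control of `W` -/

/-- `∂_{t_i}` applied to a function of `(t,u)`. -/
def derivTAlong (i : Fin N) (f : Euc N → Euc n → ℝ) : Euc N → Euc n → ℝ :=
  fun t u => fderiv ℝ (fun s => f s u) t (EuclideanSpace.single i (1 : ℝ))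

/-- Iterated `t`-partials indexed by an ordered multi-index. -/
def derivTList (β : List (Fin N)) (f : Euc N → Euc n → ℝ) : Euc N → Euc n → ℝ :=
  β.foldr derivTAlong f

/-- Iterated `u`-derivations along scaled vector fields. -/
def derivUList {ι : Type*} (X : ι → VF n) (w : ι → ℝ) (β : List ι)
    (f : Euc N → Euc n → ℝ) : Euc N → Euc n → ℝ :=
  fun t => derivList X w β (f t)

/-- `(X,d)` controls `W` on `U` for `t ∈ B^N(ρ')` with parameter `ξ₁` (ambient `Ω`). -/
def ControlsWOn {ι : Type*} [Fintype ι] (X : ι → VF n) (d : ι → Deg ν)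
    (e : Fin N → Fin ν → ℝ) (Ω U : Set (Euc n)) (ρ' ξ₁ : ℝ)
    (W : Euc N → Euc n → Euc n) : Prop :=
  (∀ x ∈ U, SatC X d x (vecConst ν ξ₁) Ω) ∧
  ∃ c : Euc n → (Fin ν → ℝ) → ι → Euc N → Euc n → ℝ,
    (∀ x ∈ U, ∀ δ ∈ unitCube ν, ∀ t ∈ ball (0 : Euc N) ρ',
      ∀ u ∈ CCBall X d Ω x (fun μ => ξ₁ * δ μ),
        W (dilate e δ t) u = ∑ l, c x δ l t u • dpow δ (d l) • X l u) ∧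
    (∀ x ∈ U, ∀ δ ∈ unitCube ν, ∀ l, ∀ β' : List (Fin N), ∀ β : List ι,
      ContinuousOn
        (fun p : Euc N × Euc n =>
          derivTList β' (derivUList X (fun l' => dpow δ (d l')) β (c x δ l)) p.1 p.2)
        (ball (0 : Euc N) ρ' ×ˢ CCBall X d Ω x (fun μ => ξ₁ * δ μ))) ∧
    (∀ m : ℕ, ∃ C : ℝ, ∀ x ∈ U, ∀ δ ∈ unitCube ν, ∀ l, ∀ β' : List (Fin N), ∀ β : List ι,
      β'.length + β.length ≤ m → ∀ t ∈ ball (0 : Euc N) ρ',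
        ∀ u ∈ CCBall X d Ω x (fun μ => ξ₁ * δ μ),
          |derivTList β' (derivUList X (fun l' => dpow δ (d l')) β (c x δ l)) t u| ≤ C)

/-- `(X,d)` controls `W` (some `ρ' ≤ ρ`, `ξ₁`, `U`), ambient `Ω`. -/
def ControlsW {ι : Type*} [Fintype ι] (X : ι → VF n) (d : ι → Deg ν)
    (e : Fin N → Fin ν → ℝ) (Ω : Set (Euc n)) (ρ : ℝ)
    (W : Euc N → Euc n → Euc n) : Prop :=
  ∃ (ρ' ξ₁ : ℝ) (U : Set (Euc n)), 0 < ρ' ∧ ρ' ≤ ρ ∧ 0 < ξ₁ ∧ IsOpen U ∧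
    (0 : Euc n) ∈ U ∧ U ⊆ Ω ∧ ControlsWOn X d e Ω U ρ' ξ₁ W

end Zhang

open Zhang

/-!
Take a bump `φ ≥ 0` supported in `(0, a)` and look for `ς = p φ` with
`p t = ∑ c_i t ^ {m_i}`, where `m = (0, a_1, …, a_k)`. The moments `∫ t ^ {m_i} ς` are the
entries of `G c`, with `G` the Gram matrix of the monomials `t ^ {m_i}` in `L²(φ dt)`.
`G` is nonsingular: `c ⬝ G c = ∫ p² φ` vanishes only if `p` vanishes on the support of `φ`,
an infinite set, which forces `c = 0` since the exponents are distinct. Hence `c` can be chosen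
so that the moment vector is the indicator of `a_1`.
-/

section Moments

open Matrix

variable {ι : Type*} [Fintype ι]

theorem eq_zero_of_forall_sum_mul_pow_eq_zero {R : Type*} [CommRing R] [IsDomain R]
    {m : ι → ℕ} (hm : Function.Injective m) {s : Set R} (hs : s.Infinite) {c : ι → R}
    (h : ∀ t ∈ s, ∑ i, c i * t ^ m i = 0) : c = 0 := by
  set p : Polynomial R := ∑ i, c i • Polynomial.monomial (m i) 1
  have hp : p = 0 := by
    refine p.eq_zero_of_infinite_isRoot (hs.mono fun t ht => ?_)
    simpa [p, Polynomial.eval_finsetSum] using h t ht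
  have hli : LinearIndependent R fun i => Polynomial.monomial (R := R) (m i) 1 := by
    simpa [Function.comp_def] using
      (Polynomial.basisMonomials R).linearIndependent.comp m hm
  exact funext (Fintype.linearIndependent_iff.mp hli c hp)

def monomialSum (m : ι → ℕ) (c : ι → ℝ) (t : ℝ) : ℝ := ∑ i, c i * t ^ m i

theorem contDiff_monomialSum (m : ι → ℕ) (c : ι → ℝ) {n : WithTop ℕ∞} :
    ContDiff ℝ n (monomialSum m c) := by
  unfold monomialSum; fun_prop

def momentMatrix (φ : ℝ → ℝ) (m : ι → ℕ) : Matrix ι ι ℝ :=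
  Matrix.of fun i j => ∫ t, t ^ (m i + m j) * φ t

variable {φ : ℝ → ℝ}

theorem integral_pow_mul_monomialSum_mul (hφ : Continuous φ) (hφc : HasCompactSupport φ)
    (m : ι → ℕ) (c : ι → ℝ) (i : ι) :
    ∫ t, t ^ m i * (monomialSum m c t * φ t) = (momentMatrix φ m *ᵥ c) i := by
  have hint (j : ι) : Integrable fun t => c j * (t ^ (m i + m j) * φ t) :=
    (((continuous_pow _).mul hφ).integrable_of_hasCompactSupport hφc.mul_left).const_mul _
  simp only [monomialSum, Finset.sum_mul, Finset.mul_sum]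
  rw [integral_finsetSum _ fun j _ => by simpa [pow_add, mul_comm, mul_left_comm] using hint j]
  simp only [Matrix.mulVec, dotProduct, momentMatrix, Matrix.of_apply]
  refine Finset.sum_congr rfl fun j _ => ?_
  rw [← integral_mul_const]
  congr 1 with t; ring

theorem dotProduct_momentMatrix_mulVec (hφ : Continuous φ) (hφc : HasCompactSupport φ)
    (m : ι → ℕ) (c : ι → ℝ) :
    c ⬝ᵥ (momentMatrix φ m *ᵥ c) = ∫ t, monomialSum m c t ^ 2 * φ t := by
  have hint (i : ι) : Integrable fun t => c i * (t ^ m i * (monomialSum m c t * φ t)) :=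
    ((((continuous_pow _).mul ((contDiff_monomialSum m c (n := 0)).continuous.mul hφ))
      ).integrable_of_hasCompactSupport hφc.mul_left.mul_left).const_mul _
  simp only [dotProduct, ← integral_pow_mul_monomialSum_mul hφ hφc, ← integral_const_mul]
  rw [← integral_finsetSum _ fun i _ => hint i]
  congr 1 with t
  simp only [← mul_assoc, ← Finset.sum_mul]
  rw [sq]; rfl

theorem momentMatrix_mulVec_injective (hφ : Continuous φ) (hφc : HasCompactSupport φ)
    (hφ0 : 0 ≤ φ) (hφs : (Function.support φ).Infinite) {m : ι → ℕ}
    (hm : Function.Injective m) : Function.Injective (momentMatrix φ m).mulVec := by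
  rw [← coe_mulVecLin, injective_iff_map_eq_zero]
  intro c (hc : momentMatrix φ m *ᵥ c = 0)
  have hS : Continuous fun t => monomialSum m c t ^ 2 * φ t :=
    ((contDiff_monomialSum m c (n := 0)).continuous.pow 2).mul hφ
  have hvanish : ∀ t, monomialSum m c t ^ 2 * φ t = 0 := by
    by_contra! ⟨t, ht⟩
    have hpos := hS.integral_pos_of_hasCompactSupport_nonneg_nonzero (μ := volume)
      hφc.mul_left (fun t => mul_nonneg (sq_nonneg _) (hφ0 t)) ht
    rw [← dotProduct_momentMatrix_mulVec hφ hφc, hc, dotProduct_zero] at hpos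
    exact hpos.false
  refine eq_zero_of_forall_sum_mul_pow_eq_zero hm hφs fun t ht => ?_
  simpa [monomialSum, Function.mem_support.mp ht] using hvanish t

theorem exists_moments_monomialSum_mul_eq (hφ : Continuous φ) (hφc : HasCompactSupport φ)
    (hφ0 : 0 ≤ φ) (hφs : (Function.support φ).Infinite) {m : ι → ℕ}
    (hm : Function.Injective m) (v : ι → ℝ) :
    ∃ c, ∀ i, ∫ t, t ^ m i * (monomialSum m c t * φ t) = v i := by
  classical
  have hunit := mulVec_injective_iff_isUnit.mp (momentMatrix_mulVec_injective hφ hφc hφ0 hφs hm)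
  obtain ⟨c, hc⟩ := mulVec_surjective_iff_isUnit.mpr hunit v
  exact ⟨c, fun i => by rw [integral_pow_mul_monomialSum_mul hφ hφc, hc]⟩

end Moments

theorem exists_contDiff_nonneg_tsupport_subset_Ioo {a b : ℝ} (hab : a < b) :
    ∃ φ : ℝ → ℝ, ContDiff ℝ (⊤ : ℕ∞) φ ∧ HasCompactSupport φ ∧ 0 ≤ φ ∧
      tsupport φ ⊆ Ioo a b ∧ (Function.support φ).Infinite := by
  let φ : ContDiffBump ((a + b) / 2) := ⟨(b - a) / 8, (b - a) / 4, by linarith, by linarith⟩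
  refine ⟨φ, φ.contDiff, φ.hasCompactSupport, fun _ => φ.nonneg, ?_, ?_⟩
  · rw [φ.tsupport_eq, Real.closedBall_eq_Icc]
    exact Icc_subset_Ioo (by simp [φ]; linarith) (by simp [φ]; linarith)
  · rw [φ.support_eq, Real.ball_eq_Ioo]
    exact Ioo_infinite (by simp [φ]; linarith)

/-- Lemma 10.1: for every `a > 0` and distinct positive integers
`a_1, …, a_k`, there is `ς ∈ C_c^∞((0,a))` with `∫ς = 0`, `∫ t^{a_1} ς(t) dt ≠ 0`, and
`∫ t^{a_j} ς(t) dt = 0` for `2 ≤ j ≤ k`. -/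
theorem statement_15 (a : ℝ) (ha : 0 < a) (k : ℕ) (hk : 0 < k)
    (as : Fin k → ℕ) (hpos : ∀ j, 0 < as j) (hinj : Function.Injective as) :
    ∃ ς : ℝ → ℝ, ContDiff ℝ (⊤ : ℕ∞) ς ∧ HasCompactSupport ς ∧
      tsupport ς ⊆ Set.Ioo 0 a ∧
      (∫ t, ς t) = 0 ∧
      (∫ t, t ^ (as ⟨0, hk⟩) * ς t) ≠ 0 ∧
      ∀ j : Fin k, j ≠ ⟨0, hk⟩ → (∫ t, t ^ (as j) * ς t) = 0 := by
  obtain ⟨φ, hφ, hφc, hφ0, hφa, hφs⟩ := exists_contDiff_nonneg_tsupport_subset_Ioo ha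
  set m : Fin (k + 1) → ℕ := Fin.cons 0 as
  have hm : Function.Injective m :=
    Fin.cons_injective_iff.mpr ⟨fun ⟨j, hj⟩ => (hpos j).ne' hj, hinj⟩
  obtain ⟨c, hc⟩ := exists_moments_monomialSum_mul_eq hφ.continuous hφc hφ0 hφs hm
    (Pi.single (Fin.succ ⟨0, hk⟩) 1)
  refine ⟨fun t => monomialSum m c t * φ t, (contDiff_monomialSum m c).mul hφ, hφc.mul_left,
    tsupport_mul_subset_right.trans hφa, ?_, ?_, ?_⟩
  · simpa [m] using hc 0
  · have h := hc (Fin.succ ⟨0, hk⟩)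
    rw [Pi.single_eq_same] at h
    exact fun h0 => one_ne_zero (h.symm.trans h0)
  · intro j hj
    have h := hc j.succ
    rwa [Pi.single_eq_of_ne ((Fin.succ_injective k).ne hj)] at h
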